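/- Let γ(θ) = (cos θ, sin θ, 1)/√2, let ρ_θ be the orthogonal projection of ℝ³ onto span(γ(θ)), and for θ ∈ [0, 2π) let b_θ = span((cos θ, sin θ, −1)). There exist constants C > 0 and δ₀ > 0 such that the following holds for all 0 < δ < δ₀ and 0 ≤ τ < 1: if E ⊂ [0, 2π) is measurable and x, y ∈ ℝ³ satisfy dist(y − x, b_θ) > δ^τ for every θ ∈ E, then the Lebesgue measure of the set {θ ∈ E : |ρ_θ(x − y)| ≤ δ} is at most C·δ^{1−τ}. -/

import Mathlib

open Set Metric MeasureTheory Real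
open scoped RealInnerProductSpace ENNReal

/-- The vector `(x, y, z)` of `ℝ³` as a Euclidean space. -/
noncomputable def e3 (x y z : ℝ) : EuclideanSpace ℝ (Fin 3) :=
  (WithLp.equiv 2 (Fin 3 → ℝ)).symm ![x, y, z]

/-- The special non-degenerate curve `γ(θ) = (cos θ, sin θ, 1)/√2`. -/
noncomputable def specialCurve (θ : ℝ) : EuclideanSpace ℝ (Fin 3) :=
  e3 (Real.cos θ / Real.sqrt 2) (Real.sin θ / Real.sqrt 2) (1 / Real.sqrt 2)

/-- The direction `(cos θ, sin θ, -1)` spanning the line `b_θ`. -/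
noncomputable def bVec (θ : ℝ) : EuclideanSpace ℝ (Fin 3) :=
  e3 (Real.cos θ) (Real.sin θ) (-1)

/-- The orthogonal projection of `x` onto the line spanned by `v` (for `v ≠ 0`). -/
noncomputable def lineProj (v x : EuclideanSpace ℝ (Fin 3)) : EuclideanSpace ℝ (Fin 3) :=
  (⟪x, v⟫ / ⟪v, v⟫) • v

/-!
Write `u = x - y`. In the orthonormal frame `γ(θ)`, `(-sin θ, cos θ, 0)`, `b_θ / √2`, the squared
distance from `y - x` to `b_θ` is `|ρ_θ u|² + g(θ)²`, where `g(θ) = u₂ cos θ - u₁ sin θ` is the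
derivative of `f(θ) = √2 ⟨u, γ(θ)⟩ = u₁ cos θ + u₂ sin θ + u₃`. When `δ^{1-τ} ≥ 1/2` the trivial
bound `2π` suffices; otherwise `2δ < δ^τ`, and every `θ` of the sublevel set has `|f(θ)| ≤ √2 δ` and
`|f'(θ)| ≥ δ^τ / √2`. In polar form `f(θ) = R cos (θ - φ) + u₃`, and `|f'| = R |sin (θ - φ)|` is
concave on each half-period, so it stays `≥ δ^τ / √2` between two points of the sublevel set in
the same half-period; the mean value theorem then bounds their distance by `4 δ^{1-τ}`, and three
half-periods cover `[0, 2π)`.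
-/

theorem concaveOn_abs_sin (k : ℤ) :
    ConcaveOn ℝ (Icc (k * π) ((k + 1) * π)) fun x ↦ |sin x| := by
  have hI : Icc (k * π) ((k + 1) * π) = (fun z ↦ -(k * π) + z) ⁻¹' Icc 0 π := by
    rw [preimage_const_add_Icc]; ring_nf
  rw [hI]
  refine (strictConcaveOn_sin_Icc.concaveOn.translate_right _).congr fun x hx ↦ ?_
  have hsin : sin (-(k * π) + x) = (-1) ^ k * sin x := by
    rw [neg_add_eq_sub, sin_sub_int_mul_pi]
  rw [Function.comp_apply, ← abs_of_nonneg (sin_nonneg_of_nonneg_of_le_pi hx.1 hx.2), hsin,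
    abs_mul, abs_neg_one_zpow, one_mul]

theorem sub_le_of_abs_cos_le_of_le_abs_sin {k : ℤ} {R c ε m ψ₁ ψ₂ : ℝ} (hm : 0 < m)
    (h₁ : k * π ≤ ψ₁) (h₁₂ : ψ₁ ≤ ψ₂) (h₂ : ψ₂ ≤ (k + 1) * π)
    (hc₁ : |R * cos ψ₁ + c| ≤ ε) (hc₂ : |R * cos ψ₂ + c| ≤ ε)
    (hs₁ : m ≤ |R * sin ψ₁|) (hs₂ : m ≤ |R * sin ψ₂|) :
    ψ₂ - ψ₁ ≤ 2 * ε / m := by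
  rcases h₁₂.eq_or_lt with rfl | hlt
  · rw [sub_self]; have := (abs_nonneg _).trans hc₁; positivity
  obtain ⟨ξ, hξ, hslope⟩ := exists_hasDerivAt_eq_slope (fun t ↦ R * cos t) (fun t ↦ -(R * sin t))
    hlt (continuous_const.mul continuous_cos).continuousOn
    (fun t _ ↦ by simpa using (hasDerivAt_cos t).const_mul R)
  have hsξ : m ≤ |R * sin ξ| := by
    have := (concaveOn_abs_sin k).min_le_of_mem_Icc ⟨h₁, h₁₂.trans h₂⟩ ⟨h₁.trans h₁₂, h₂⟩
      (Ioo_subset_Icc_self hξ)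
    rw [abs_mul] at hs₁ hs₂ ⊢
    calc m ≤ min (|R| * |sin ψ₁|) (|R| * |sin ψ₂|) := le_min hs₁ hs₂
      _ = |R| * min |sin ψ₁| |sin ψ₂| := (mul_min_of_nonneg _ _ (abs_nonneg R)).symm
      _ ≤ |R| * |sin ξ| := mul_le_mul_of_nonneg_left this (abs_nonneg R)
  have hdiff : |R * sin ξ| * (ψ₂ - ψ₁) ≤ 2 * ε := calc
    |R * sin ξ| * (ψ₂ - ψ₁) = |(R * cos ψ₂ + c) - (R * cos ψ₁ + c)| := by
      rw [add_sub_add_right_eq_sub, ← abs_of_pos (sub_pos.2 hlt), ← abs_mul, ← abs_neg,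
        ← neg_mul, hslope, div_mul_cancel₀ _ (sub_pos.2 hlt).ne']
    _ ≤ |R * cos ψ₂ + c| + |R * cos ψ₁ + c| := abs_sub _ _
    _ ≤ 2 * ε := by linarith
  rw [le_div_iff₀ hm]
  nlinarith

theorem volume_le_of_abs_cos_le_of_le_abs_sin {T : Set ℝ} {φ s R c ε m : ℝ} (hm : 0 < m)
    (hT : ∀ θ ∈ T, θ - φ ∈ Icc s (s + 2 * π) ∧ |R * cos (θ - φ) + c| ≤ ε ∧
      m ≤ |R * sin (θ - φ)|) :
    volume T ≤ ENNReal.ofReal (6 * ε / m) := by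
  set piece : ℤ → Set ℝ := fun k ↦ {θ ∈ T | θ - φ ∈ Icc (k * π) ((k + 1) * π)}
  have hpiece (k : ℤ) : volume (piece k) ≤ ENNReal.ofReal (2 * ε / m) := by
    refine (Real.volume_le_diam _).trans (ediam_le_of_forall_dist_le ?_)
    rintro θ₁ ⟨hθ₁, hk₁⟩ θ₂ ⟨hθ₂, hk₂⟩
    obtain ⟨-, hc₁, hs₁⟩ := hT θ₁ hθ₁
    obtain ⟨-, hc₂, hs₂⟩ := hT θ₂ hθ₂
    rw [Real.dist_eq, abs_le]
    rcases le_total θ₁ θ₂ with h | h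
    · have := sub_le_of_abs_cos_le_of_le_abs_sin hm hk₁.1 (by linarith) hk₂.2 hc₁ hc₂ hs₁ hs₂
      constructor <;> linarith [div_nonneg ((abs_nonneg _).trans hc₁) hm.le]
    · have := sub_le_of_abs_cos_le_of_le_abs_sin hm hk₂.1 (by linarith) hk₁.2 hc₂ hc₁ hs₂ hs₁
      constructor <;> linarith [div_nonneg ((abs_nonneg _).trans hc₁) hm.le]
  have hcover : T ⊆ ⋃ k ∈ Finset.Icc ⌊s / π⌋ (⌊s / π⌋ + 2), piece k := by
    intro θ hθ
    obtain ⟨hs, hs'⟩ := (hT θ hθ).1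
    have hlow : ⌊s / π⌋ ≤ ⌊(θ - φ) / π⌋ := Int.floor_mono (by gcongr)
    have hup : ⌊(θ - φ) / π⌋ ≤ ⌊s / π⌋ + 2 := by
      rw [← Int.floor_add_ofNat]
      refine Int.floor_mono ?_
      rw [div_le_iff₀ pi_pos]
      linarith [add_mul (s / π) 2 π, div_mul_cancel₀ s pi_pos.ne']
    refine mem_biUnion (Finset.mem_Icc.2 ⟨hlow, hup⟩) ⟨hθ, ?_, ?_⟩
    · exact (le_div_iff₀ pi_pos).1 (Int.floor_le _)
    · exact ((div_lt_iff₀ pi_pos).1 (Int.lt_floor_add_one _)).le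
  calc volume T ≤ ∑ k ∈ Finset.Icc ⌊s / π⌋ (⌊s / π⌋ + 2), volume (piece k) :=
        (measure_mono hcover).trans (measure_biUnion_finset_le _ _)
    _ ≤ ∑ k ∈ Finset.Icc ⌊s / π⌋ (⌊s / π⌋ + 2), ENNReal.ofReal (2 * ε / m) :=
        Finset.sum_le_sum fun k _ ↦ hpiece k
    _ = ENNReal.ofReal (6 * ε / m) := by
      have hcard : (Finset.Icc ⌊s / π⌋ (⌊s / π⌋ + 2)).card = 3 := by
        rw [Int.card_Icc, add_assoc, add_sub_cancel_left]; rfl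
      rw [Finset.sum_const, hcard, nsmul_eq_mul, ← ENNReal.ofReal_natCast,
        ← ENNReal.ofReal_mul (by positivity)]
      ring_nf

theorem volume_le_of_abs_trig_le_of_le_abs_trig_deriv {T : Set ℝ} {s a b c ε m : ℝ} (hm : 0 < m)
    (hT : T ⊆ Icc s (s + 2 * π))
    (hf : ∀ θ ∈ T, |a * cos θ + b * sin θ + c| ≤ ε ∧ m ≤ |b * cos θ - a * sin θ|) :
    volume T ≤ ENNReal.ofReal (6 * ε / m) := by
  set z : ℂ := ⟨a, b⟩
  have hpolar (θ : ℝ) : a * cos θ + b * sin θ = ‖z‖ * cos (θ - z.arg) ∧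
      b * cos θ - a * sin θ = -(‖z‖ * sin (θ - z.arg)) := by
    have ha : ‖z‖ * cos z.arg = a := Complex.norm_mul_cos_arg z
    have hb : ‖z‖ * sin z.arg = b := Complex.norm_mul_sin_arg z
    rw [cos_sub, sin_sub, ← ha, ← hb]
    constructor <;> ring
  refine volume_le_of_abs_cos_le_of_le_abs_sin (φ := z.arg) (s := s - z.arg) (R := ‖z‖) (c := c) hm
    fun θ hθ ↦ ?_
  obtain ⟨hcos, hsin⟩ := hpolar θ
  rw [← hcos, ← abs_neg (_ * sin _), ← hsin]
  exact ⟨⟨by linarith [(hT hθ).1], by linarith [(hT hθ).2]⟩, hf θ hθ⟩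

theorem div_sqrt_two_le_abs_of_sq_lt_sq_add_sq {p q t δ : ℝ} (hp : 0 ≤ p) (hpδ : p ≤ δ)
    (hδt : 2 * δ ≤ t) (h : t ^ 2 < p ^ 2 + q ^ 2) : t / √2 ≤ |q| := by
  have ht : 0 ≤ t := by linarith
  refine (le_abs_self _).trans (sq_le_sq.1 ?_)
  rw [div_pow, sq_sqrt zero_le_two]
  nlinarith

theorem inner_e3 (w : EuclideanSpace ℝ (Fin 3)) (a b c : ℝ) :
    ⟪w, e3 a b c⟫ = w 0 * a + w 1 * b + w 2 * c := by
  simp only [e3, WithLp.equiv_symm_apply, PiLp.inner_apply, RCLike.inner_apply, ringHom_apply,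
    Fin.sum_univ_three, Fin.isValue, Matrix.cons_val_zero, Matrix.cons_val_one, Matrix.cons_val]
  ring

theorem norm_sq_eq_sum_three (w : EuclideanSpace ℝ (Fin 3)) :
    ‖w‖ ^ 2 = w 0 ^ 2 + w 1 ^ 2 + w 2 ^ 2 := by
  simp [EuclideanSpace.norm_sq_eq, Fin.sum_univ_three]

theorem inner_specialCurve (w : EuclideanSpace ℝ (Fin 3)) (θ : ℝ) :
    ⟪w, specialCurve θ⟫ = (w 0 * cos θ + w 1 * sin θ + w 2) / √2 := by
  rw [specialCurve, inner_e3]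
  ring

theorem norm_specialCurve (θ : ℝ) : ‖specialCurve θ‖ = 1 := by
  rw [← pow_eq_one_iff_of_nonneg (norm_nonneg _) two_ne_zero, norm_sq_eq_sum_three]
  simp only [Fin.isValue, specialCurve, e3, one_div, WithLp.equiv_symm_apply, Matrix.cons_val_zero,
    div_pow, Nat.ofNat_nonneg, sq_sqrt, Matrix.cons_val_one, Matrix.cons_val, inv_pow]
  field_simp
  linarith [cos_sq_add_sin_sq θ]

theorem norm_lineProj_specialCurve (θ : ℝ) (w : EuclideanSpace ℝ (Fin 3)) :
    ‖lineProj (specialCurve θ) w‖ = |w 0 * cos θ + w 1 * sin θ + w 2| / √2 := by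
  rw [lineProj, inner_self_eq_one_of_norm_eq_one (norm_specialCurve θ), div_one, norm_smul,
    Real.norm_eq_abs, norm_specialCurve, mul_one, inner_specialCurve, abs_div,
    abs_of_pos (by positivity : (0 : ℝ) < √2)]

theorem infDist_neg_span_bVec_sq_le (θ : ℝ) (u : EuclideanSpace ℝ (Fin 3)) :
    infDist (-u) (Submodule.span ℝ {bVec θ} : Set (EuclideanSpace ℝ (Fin 3))) ^ 2 ≤
      ‖lineProj (specialCurve θ) u‖ ^ 2 + (u 1 * cos θ - u 0 * sin θ) ^ 2 := by
  -- `t • bVec θ` is the orthogonal projection of `-u` onto `b_θ`, as `‖bVec θ‖² = 2`.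
  set t := (u 2 - u 0 * cos θ - u 1 * sin θ) / 2
  have hmem : t • bVec θ ∈ Submodule.span ℝ {bVec θ} :=
    Submodule.smul_mem _ t (Submodule.mem_span_singleton_self _)
  calc infDist (-u) (Submodule.span ℝ {bVec θ} : Set (EuclideanSpace ℝ (Fin 3))) ^ 2
      ≤ dist (-u) (t • bVec θ) ^ 2 :=
        pow_le_pow_left₀ infDist_nonneg (infDist_le_dist_of_mem hmem) 2
    _ = _ := by
      rw [dist_eq_norm, norm_sq_eq_sum_three, norm_lineProj_specialCurve, div_pow, sq_abs,
        sq_sqrt zero_le_two]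
      simp only [Fin.isValue, bVec, e3, WithLp.equiv_symm_apply, PiLp.sub_apply, PiLp.neg_apply,
        PiLp.smul_apply, Matrix.cons_val_zero, smul_eq_mul, Matrix.cons_val_one, Matrix.cons_val,
        mul_neg, mul_one, sub_neg_eq_add]
      linear_combination
        ((u 2 - (u 0 * cos θ + u 1 * sin θ)) ^ 2 / 4 - u 0 ^ 2 - u 1 ^ 2) * sin_sq_add_cos_sq θ

/-- Lemma 4.4 (improved sublevel estimate): if `y - x` stays at distance `> δ^τ` from
all the lines `b_θ = span(cos θ, sin θ, -1)`, `θ ∈ E`, then the set of `θ ∈ E` with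
`|ρ_θ(x - y)| ≤ δ` has measure `≲ δ^{1-τ}`. -/
theorem improved_sublevel_estimate :
    ∃ C : ℝ, 0 < C ∧ ∃ δ₀ : ℝ, 0 < δ₀ ∧
      ∀ δ : ℝ, 0 < δ → δ < δ₀ → ∀ τ : ℝ, 0 ≤ τ → τ < 1 →
      ∀ E : Set ℝ, MeasurableSet E → E ⊆ Set.Ico 0 (2 * π) →
      ∀ x y : EuclideanSpace ℝ (Fin 3),
        (∀ θ ∈ E,
          δ ^ τ < Metric.infDist (y - x)
            ((Submodule.span ℝ {bVec θ} : Submodule ℝ (EuclideanSpace ℝ (Fin 3))) :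
              Set (EuclideanSpace ℝ (Fin 3)))) →
        volume {θ ∈ E | ‖lineProj (specialCurve θ) (x - y)‖ ≤ δ} ≤
          ENNReal.ofReal (C * δ ^ (1 - τ)) := by
  refine ⟨16, by norm_num, 1, one_pos, fun δ hδ _ τ _ _ E _ hE x y hfar ↦ ?_⟩
  set u := x - y
  set S := {θ ∈ E | ‖lineProj (specialCurve θ) u‖ ≤ δ}
  have hδτ : 0 < δ ^ τ := rpow_pos_of_pos hδ τ
  have hS : S ⊆ Ico 0 (2 * π) := fun θ hθ ↦ hE hθ.1
  by_cases hlarge : 1 / 2 ≤ δ ^ (1 - τ)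
  · calc volume S ≤ volume (Ico 0 (2 * π)) := measure_mono hS
      _ = ENNReal.ofReal (2 * π) := by rw [volume_Ico, sub_zero]
      _ ≤ ENNReal.ofReal (16 * δ ^ (1 - τ)) :=
        ENNReal.ofReal_le_ofReal (by linarith [pi_le_four])
  have hδ_eq : δ = δ ^ τ * δ ^ (1 - τ) := by rw [← rpow_add hδ, add_sub_cancel, rpow_one]
  have h2δ : 2 * δ ≤ δ ^ τ := by nlinarith
  have hpoint (θ : ℝ) (hθ : θ ∈ S) : |u 0 * cos θ + u 1 * sin θ + u 2| ≤ √2 * δ ∧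
      δ ^ τ / √2 ≤ |u 1 * cos θ - u 0 * sin θ| := by
    refine ⟨?_, ?_⟩
    · have hproj := hθ.2
      rw [norm_lineProj_specialCurve, div_le_iff₀ (by positivity)] at hproj
      linarith
    · have hdist := hfar θ hθ.1
      rw [← neg_sub] at hdist
      exact div_sqrt_two_le_abs_of_sq_lt_sq_add_sq (norm_nonneg _) hθ.2 h2δ
        ((pow_lt_pow_left₀ hdist hδτ.le two_ne_zero).trans_le (infDist_neg_span_bVec_sq_le θ _))
  calc volume S ≤ ENNReal.ofReal (6 * (√2 * δ) / (δ ^ τ / √2)) :=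
        volume_le_of_abs_trig_le_of_le_abs_trig_deriv (by positivity)
          (hS.trans (by rw [zero_add]; exact Ico_subset_Icc_self)) hpoint
    _ = ENNReal.ofReal (12 * δ ^ (1 - τ)) := by
      rw [rpow_sub hδ, rpow_one]
      field_simp
      rw [sq_sqrt zero_le_two]
      ring_nf
    _ ≤ ENNReal.ofReal (16 * δ ^ (1 - τ)) :=
      ENNReal.ofReal_le_ofReal (by linarith [rpow_pos_of_pos hδ (1 - τ)])
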